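/- Let D = D₁ ∪ D₂ be a union of two identical open balls in ℝ³ with disjoint closures, symmetric with respect to the origin (D₂ = −D₁), and assume the map η ↦ S⁰_D[η] is injective on L²(∂D, σ). Let ψ₁, ψ₂ ∈ L²(∂D, σ) satisfy S⁰_D[ψ₁] = 1 on ∂D₁, S⁰_D[ψ₁] = 0 on ∂D₂, S⁰_D[ψ₂] = 0 on ∂D₁, S⁰_D[ψ₂] = 1 on ∂D₂. Then the vector-valued integral vanishes: ∫_{∂D} y (ψ₁(y) + ψ₂(y)) dσ(y) = 0 ∈ ℝ³, i.e., ∫_{∂D} y_i (ψ₁(y) + ψ₂(y)) dσ(y) = 0 for i = 1, 2, 3. -/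

import Mathlib

/-!
The reflection `y ↦ -y` swaps the two spheres and preserves the surface measure, so it commutes
with `S⁰_D`. Hence `y ↦ ψ₁ (-y)` solves the boundary problem defining `ψ₂`, and injectivity gives
`ψ₂ = ψ₁ ∘ (-·)` a.e. The density `ψ₁ + ψ₂` is then even, `y ↦ y_i` is odd, and the integral of an
odd function against a reflection-invariant measure vanishes.
-/

open MeasureTheory Metric Classical

noncomputable section

local notation "E3" => EuclideanSpace ℝ (Fin 3)

/-- The boundary `∂D = ∂D₁ ∪ ∂D₂` of the two-ball domain `D = D₁ ∪ D₂`. -/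
def dimerBdry (c₁ c₂ : E3) (r₁ r₂ : ℝ) : Set E3 := sphere c₁ r₁ ∪ sphere c₂ r₂

/-- The surface measure `σ`: 2-dimensional Hausdorff measure restricted to `∂D`. -/
def dimerMeas (c₁ c₂ : E3) (r₁ r₂ : ℝ) : Measure E3 :=
  (μH[2] : Measure E3).restrict (dimerBdry c₁ c₂ r₁ r₂)

/-- The quasi-static single layer potential
`S⁰_D[φ](x) = −(1/4π) ∫_{∂D} φ(y) |x−y|⁻¹ dσ(y)` (complex density). -/
def SL0 (c₁ c₂ : E3) (r₁ r₂ : ℝ) (φ : E3 → ℂ) (x : E3) : ℂ :=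
  -(4 * (Real.pi : ℂ))⁻¹ * ∫ y in dimerBdry c₁ c₂ r₁ r₂, φ y * ((‖x - y‖⁻¹ : ℝ) : ℂ) ∂μH[2]

/-- The map `η ↦ S⁰_D[η]` is injective on `L²(∂D, σ)`. -/
def SL0Injective (c₁ c₂ : E3) (r₁ r₂ : ℝ) : Prop :=
  ∀ η η' : E3 → ℂ, MemLp η 2 (dimerMeas c₁ c₂ r₁ r₂) →
    MemLp η' 2 (dimerMeas c₁ c₂ r₁ r₂) →
    (∀ᵐ x ∂(dimerMeas c₁ c₂ r₁ r₂), SL0 c₁ c₂ r₁ r₂ η x = SL0 c₁ c₂ r₁ r₂ η' x) →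
    η =ᵐ[dimerMeas c₁ c₂ r₁ r₂] η'

open Pointwise

theorem integral_eq_zero_of_odd {α F : Type*} [MeasurableSpace α] [InvolutiveNeg α]
    [MeasurableNeg α] [NormedAddCommGroup F] [NormedSpace ℝ F] {μ : Measure α}
    (hμ : MeasurePreserving Neg.neg μ μ) {f : α → F} (hf : ∀ᵐ x ∂μ, f (-x) = -f x) :
    ∫ x, f x ∂μ = 0 := by
  have h : ∫ x, f x ∂μ = -∫ x, f x ∂μ := calc
    ∫ x, f x ∂μ = ∫ x, f (-x) ∂μ :=
      (hμ.integral_comp (MeasurableEquiv.neg α).measurableEmbedding f).symm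
    _ = ∫ x, -f x ∂μ := integral_congr_ae hf
    _ = -∫ x, f x ∂μ := integral_neg f
  have : IsAddTorsionFree F := .of_isTorsionFree ℝ F
  exact self_eq_neg.mp h

theorem measurePreserving_neg_hausdorffMeasure_restrict {E : Type*} [NormedAddCommGroup E]
    [MeasurableSpace E] [BorelSpace E] {s : Set E} (hs : -s = s) (d : ℝ) :
    MeasurePreserving Neg.neg (μH[d].restrict s) (μH[d].restrict s) := by
  have := ((IsometryEquiv.neg E).measurePreserving_hausdorffMeasure d).restrict_preimage_emb
    (MeasurableEquiv.neg E).measurableEmbedding s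
  rwa [show ⇑(IsometryEquiv.neg E) = Neg.neg from rfl, Set.neg_preimage, hs] at this

theorem neg_dimerBdry (c : E3) (r : ℝ) : -dimerBdry c (-c) r r = dimerBdry c (-c) r r := by
  rw [dimerBdry, Set.union_neg, neg_sphere, neg_sphere, neg_neg, Set.union_comm]

theorem measurePreserving_neg_dimerMeas (c : E3) (r : ℝ) :
    MeasurePreserving Neg.neg (dimerMeas c (-c) r r) (dimerMeas c (-c) r r) :=
  measurePreserving_neg_hausdorffMeasure_restrict (neg_dimerBdry c r) 2

theorem SL0_comp_neg (c : E3) (r : ℝ) (ψ : E3 → ℂ) (x : E3) :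
    SL0 c (-c) r r (fun y => ψ (-y)) x = SL0 c (-c) r r ψ (-x) := by
  have h := (measurePreserving_neg_dimerMeas c r).integral_comp
    (MeasurableEquiv.neg E3).measurableEmbedding fun y => ψ y * ((‖y + x‖⁻¹ : ℝ) : ℂ)
  simp only [neg_add_eq_sub] at h
  simp only [SL0, dimerMeas] at h ⊢
  rw [h]
  simp only [neg_sub_left, norm_neg]

theorem monopole_first_moment_vanishes_general
    (c : E3) (r : ℝ)
    (hinj : SL0Injective c (-c) r r)
    (ψ₁ ψ₂ : E3 → ℂ)
    (hψ₁ : MemLp ψ₁ 2 (dimerMeas c (-c) r r))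
    (hψ₂ : MemLp ψ₂ 2 (dimerMeas c (-c) r r))
    (hψ₁1 : ∀ x ∈ sphere c r, SL0 c (-c) r r ψ₁ x = 1)
    (hψ₁2 : ∀ x ∈ sphere (-c) r, SL0 c (-c) r r ψ₁ x = 0)
    (hψ₂1 : ∀ x ∈ sphere c r, SL0 c (-c) r r ψ₂ x = 0)
    (hψ₂2 : ∀ x ∈ sphere (-c) r, SL0 c (-c) r r ψ₂ x = 1) :
    ∀ i : Fin 3,
      ∫ y in dimerBdry c (-c) r r, ((y i : ℝ) : ℂ) * (ψ₁ y + ψ₂ y) ∂μH[2] = 0 := by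
  have hσ := measurePreserving_neg_dimerMeas c r
  have hswap : ψ₂ =ᵐ[dimerMeas c (-c) r r] fun y => ψ₁ (-y) := by
    refine hinj _ _ hψ₂ (hψ₁.comp_measurePreserving hσ) ?_
    filter_upwards [ae_restrict_mem (isClosed_sphere.union isClosed_sphere).measurableSet]
      with x hx
    rw [SL0_comp_neg]
    rcases hx with hx | hx
    · rw [hψ₂1 x hx, hψ₁2 (-x) (by rwa [← neg_sphere, Set.neg_mem_neg])]
    · rw [hψ₂2 x hx, hψ₁1 (-x) (by rwa [← neg_neg c, ← neg_sphere, Set.neg_mem_neg])]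
  have heven : ∀ᵐ y ∂dimerMeas c (-c) r r, ψ₁ (-y) + ψ₂ (-y) = ψ₁ y + ψ₂ y := by
    filter_upwards [hswap, hσ.quasiMeasurePreserving.ae_eq_comp hswap] with y h h'
    rw [← h, show ψ₂ (-y) = ψ₁ y by simpa using h', add_comm]
  intro i
  refine integral_eq_zero_of_odd hσ ?_
  filter_upwards [heven] with y hy
  rw [hy, PiLp.neg_apply, Complex.ofReal_neg, neg_mul]

/-- for a symmetric dimer (`D₂ = −D₁`),
`∫_{∂D} y_i (ψ₁ + ψ₂) dσ = 0` for `i = 1, 2, 3`. -/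
theorem monopole_first_moment_vanishes
    (c : E3) (r : ℝ) (hr : 0 < r)
    (hdisj : Disjoint (closedBall c r) (closedBall (-c) r))
    (hinj : SL0Injective c (-c) r r)
    (ψ₁ ψ₂ : E3 → ℂ)
    (hψ₁ : MemLp ψ₁ 2 (dimerMeas c (-c) r r))
    (hψ₂ : MemLp ψ₂ 2 (dimerMeas c (-c) r r))
    (hψ₁1 : ∀ x ∈ sphere c r, SL0 c (-c) r r ψ₁ x = 1)
    (hψ₁2 : ∀ x ∈ sphere (-c) r, SL0 c (-c) r r ψ₁ x = 0)
    (hψ₂1 : ∀ x ∈ sphere c r, SL0 c (-c) r r ψ₂ x = 0)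
    (hψ₂2 : ∀ x ∈ sphere (-c) r, SL0 c (-c) r r ψ₂ x = 1) :
    ∀ i : Fin 3,
      ∫ y in dimerBdry c (-c) r r, ((y i : ℝ) : ℂ) * (ψ₁ y + ψ₂ y) ∂μH[2] = 0 :=
  monopole_first_moment_vanishes_general c r hinj ψ₁ ψ₂ hψ₁ hψ₂ hψ₁1 hψ₁2 hψ₂1 hψ₂2
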